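/- Every strong homomorphism ψ from C_5' to the Clebsch graph L equals σ ∘ φ for some automorphism σ of L, where φ maps the isolated vertex x_0 to 00000 and maps x_1,...,x_5 to the cyclic shifts 00011, 01100, 10001, 00110, 11000 (in the order giving a 5-cycle image). -/

import Mathlib

/-- Vertices of the Clebsch graph: binary 5-sequences with an even number of ones. -/
abbrev ClebschVert : Type := {v : Fin 5 → ZMod 2 // ∑ i, v i = 0}

/-- The Clebsch graph: two vertices are adjacent iff their termwise mod-2 sum has weight 4,
i.e. they differ in exactly four coordinates. -/
def Clebsch : SimpleGraph ClebschVert where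
  Adj x y := hammingDist x.1 y.1 = 4
  symm := ⟨fun x y h => by simpa [hammingDist_comm] using h⟩
  loopless := ⟨fun x h => by simp [hammingDist_self] at h⟩

instance : DecidableRel Clebsch.Adj := fun _ _ => Nat.decEq _ _

/-- A concrete vertex of the Clebsch graph. -/
def cv (a b c d e : ZMod 2) (h : a + b + c + d + e = 0 := by decide) : ClebschVert :=
  ⟨![a, b, c, d, e], by simp [Fin.sum_univ_five]; linear_combination h⟩

/-- C₅′: the 5-cycle on vertices 1,…,5 together with the isolated vertex 0. -/
def C5' : SimpleGraph (Fin 6) :=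
  SimpleGraph.fromRel fun i j =>
    (i.val, j.val) ∈ [(1, 2), (2, 3), (3, 4), (4, 5), (5, 1)]

/-- The standard strong homomorphism φ : C₅′ → Clebsch graph, sending the isolated vertex
to 00000 and the cycle vertices to the cyclic shifts of 00011 in a 5-cycle order. -/
def phi : Fin 6 → ClebschVert :=
  ![cv 0 0 0 0 0, cv 0 0 0 1 1, cv 0 1 1 0 0, cv 1 0 0 0 1, cv 0 0 1 1 0, cv 1 1 0 0 0]


/-! Translations `v ↦ v + t` and coordinate permutations are automorphisms of the Clebsch
graph. Translating by `ψ x₀` we may assume `ψ x₀ = 00000`. The cycle vertices are then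
non-neighbours of `00000` other than itself, i.e. vectors of weight 2, and two such vectors are
adjacent iff their supports are disjoint: `ψ` maps the 5-cycle onto an induced pentagon of the
Petersen graph `K(5,2)`. The coordinate permutations act simply transitively on the labelled
induced pentagons of `K(5,2)` (there are `12 · 10 = 120 = 5!` of them), which is checked by a
finite search. -/

theorem hammingDist_comp_equiv {ι κ β : Type*} [Fintype ι] [Fintype κ] [DecidableEq β]
    (e : κ ≃ ι) (x y : ι → β) : hammingDist (x ∘ e) (y ∘ e) = hammingDist x y :=
  Finset.card_equiv e (by simp)

theorem hammingDist_add_right {ι : Type*} [Fintype ι] {β : ι → Type*} [∀ i, DecidableEq (β i)]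
    [∀ i, Add (β i)] [∀ i, IsRightCancelAdd (β i)] (x y t : ∀ i, β i) :
    hammingDist (x + t) (y + t) = hammingDist x y :=
  hammingDist_comp (fun i a => a + t i) fun i => add_left_injective (t i)

instance : DecidableRel C5'.Adj := by
  unfold C5'
  infer_instance

namespace Clebsch

def permAut (p : Equiv.Perm (Fin 5)) : Clebsch ≃g Clebsch where
  toFun v := ⟨v.1 ∘ p, by simpa using (Equiv.sum_comp p v.1).trans v.2⟩
  invFun v := ⟨v.1 ∘ p.symm, by simpa using (Equiv.sum_comp p.symm v.1).trans v.2⟩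
  left_inv v := by ext; simp
  right_inv v := by ext; simp
  map_rel_iff' := hammingDist_comp_equiv p _ _ |>.congr_left

def translateAut (t : ClebschVert) : Clebsch ≃g Clebsch where
  toFun v := ⟨v.1 + t.1, by simp [Finset.sum_add_distrib, v.2, t.2]⟩
  invFun v := ⟨v.1 + t.1, by simp [Finset.sum_add_distrib, v.2, t.2]⟩
  left_inv v := by ext; simp [add_assoc, CharTwo.add_self_eq_zero]
  right_inv v := by ext; simp [add_assoc, CharTwo.add_self_eq_zero]
  map_rel_iff' := hammingDist_add_right _ _ t.1 |>.congr_left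

theorem val_phi_zero : (phi 0).1 = 0 := by
  ext i
  fin_cases i <;> rfl

theorem translateAut_self (t : ClebschVert) : translateAut t t = phi 0 := by
  ext i
  rw [val_phi_zero]
  exact CharTwo.add_self_eq_zero _

theorem translateAut_translateAut (t v : ClebschVert) :
    translateAut t (translateAut t v) = v :=
  (translateAut t).symm_apply_apply v

theorem permAut_phi_zero (p : Equiv.Perm (Fin 5)) : permAut p (phi 0) = phi 0 := by
  ext i
  exact (congrFun val_phi_zero (p i)).trans (congrFun val_phi_zero i).symm

end Clebsch

open Clebsch

-- The quantifiers are nested so that `decide` prunes the search after each vertex.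
set_option maxRecDepth 100000 in
set_option synthInstance.maxSize 2000 in
theorem exists_permAut_of_pentagon : ∀ v1 : ClebschVert, ¬ Clebsch.Adj (phi 0) v1 →
    ∀ v2 : ClebschVert, Clebsch.Adj v1 v2 → ¬ Clebsch.Adj (phi 0) v2 →
    ∀ v3 : ClebschVert, Clebsch.Adj v2 v3 → ¬ Clebsch.Adj (phi 0) v3 → ¬ Clebsch.Adj v1 v3 →
    ∀ v4 : ClebschVert, Clebsch.Adj v3 v4 → ¬ Clebsch.Adj (phi 0) v4 → ¬ Clebsch.Adj v1 v4 →
      ¬ Clebsch.Adj v2 v4 →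
    ∀ v5 : ClebschVert, Clebsch.Adj v4 v5 → Clebsch.Adj v5 v1 → ¬ Clebsch.Adj (phi 0) v5 →
      ¬ Clebsch.Adj v2 v5 → ¬ Clebsch.Adj v3 v5 →
    ∃ p : Equiv.Perm (Fin 5), v1 = permAut p (phi 1) ∧ v2 = permAut p (phi 2) ∧
      v3 = permAut p (phi 3) ∧ v4 = permAut p (phi 4) ∧ v5 = permAut p (phi 5) := by
  decide

theorem exists_permAut_of_strongHom_of_map_zero (w : Fin 6 → ClebschVert)
    (hw : ∀ x y : Fin 6, C5'.Adj x y ↔ Clebsch.Adj (w x) (w y)) (h0 : w 0 = phi 0) :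
    ∃ p : Equiv.Perm (Fin 5), ∀ i, w i = permAut p (phi i) := by
  refine (exists_permAut_of_pentagon (w 1) ?_ (w 2) ?_ ?_ (w 3) ?_ ?_ ?_ (w 4) ?_ ?_ ?_ ?_
    (w 5) ?_ ?_ ?_ ?_ ?_).imp fun p ⟨h1, h2, h3, h4, h5⟩ i => ?onPhi
  case onPhi =>
    fin_cases i
    exacts [h0.trans (permAut_phi_zero p).symm, h1, h2, h3, h4, h5]
  all_goals simp only [← h0, ← hw]; decide

/-- Every strong homomorphism from C₅′ to the Clebsch graph equals σ ∘ φ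
for some automorphism σ of the Clebsch graph. -/
theorem strongHom_C5'_eq_aut_comp_phi (ψ : Fin 6 → ClebschVert)
    (hψ : ∀ x y : Fin 6, C5'.Adj x y ↔ Clebsch.Adj (ψ x) (ψ y)) :
    ∃ σ : Clebsch ≃g Clebsch, ∀ i, ψ i = σ (phi i) := by
  set σ₀ := translateAut (ψ 0)
  obtain ⟨p, hp⟩ := exists_permAut_of_strongHom_of_map_zero (σ₀ ∘ ψ)
    (fun x y => (hψ x y).trans σ₀.map_adj_iff.symm) (translateAut_self _)
  refine ⟨(permAut p).trans σ₀, fun i => ?_⟩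
  rw [RelIso.trans_apply, ← hp i, Function.comp_apply, translateAut_translateAut]
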